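/- arXiv:1412.8568 — 2 statements merged into one kernel-verified Lean document; each statement's English description precedes it below -/
import Mathlib

section
/- Suppose u: ℝ³ → ℝ is a smooth function on a box Ω such that ∂³u/∂x_i²∂x_j ≡ 0 on Ω for all pairs of distinct indices i ≠ j ∈ {1,2,3}. Then u has the form u(x₁,x₂,x₃) = f₁(x₁) + f₂(x₂) + f₃(x₃) + a·x₁x₂x₃ + b·x₁x₂ + c·x₁x₃ + d·x₂x₃ for some smooth single-variable functions f₁, f₂, f₃ and constants a, b, c, d. -/
open Set

/-- Partial derivative in the first variable. -/
noncomputable def pd1 (f : ℝ → ℝ → ℝ → ℝ) : ℝ → ℝ → ℝ → ℝ :=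
  fun x y z => deriv (fun t => f t y z) x
/-- Partial derivative in the second variable. -/
noncomputable def pd2 (f : ℝ → ℝ → ℝ → ℝ) : ℝ → ℝ → ℝ → ℝ :=
  fun x y z => deriv (fun t => f x t z) y
/-- Partial derivative in the third variable. -/
noncomputable def pd3 (f : ℝ → ℝ → ℝ → ℝ) : ℝ → ℝ → ℝ → ℝ :=
  fun x y z => deriv (fun t => f x y t) z

def ee1 : ℝ × ℝ × ℝ := (1, 0, 0)
def ee2 : ℝ × ℝ × ℝ := (0, 1, 0)
def ee3 : ℝ × ℝ × ℝ := (0, 0, 1)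

/-- Directional derivative. -/
noncomputable def Dd (v : ℝ × ℝ × ℝ) (F : ℝ × ℝ × ℝ → ℝ) : ℝ × ℝ × ℝ → ℝ :=
  fun p => fderiv ℝ F p v

lemma Dd_contDiff {F : ℝ × ℝ × ℝ → ℝ} (hF : ContDiff ℝ (⊤ : ℕ∞) F) (v : ℝ × ℝ × ℝ) :
    ContDiff ℝ (⊤ : ℕ∞) (Dd v F) := by
  have h1 : ContDiff ℝ (⊤ : ℕ∞) (fderiv ℝ F) := hF.fderiv_right (by simp)
  exact (ContinuousLinearMap.apply ℝ ℝ v).contDiff.comp h1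

lemma hasDerivAt_slice1 {F : ℝ × ℝ × ℝ → ℝ} (hF : Differentiable ℝ F) (x y z : ℝ) :
    HasDerivAt (fun t => F (t, y, z)) (Dd ee1 F (x, y, z)) x := by
  have hc : HasDerivAt (fun t : ℝ => ((t, y, z) : ℝ × ℝ × ℝ)) ee1 x :=
    (hasDerivAt_id x).prodMk ((hasDerivAt_const x y).prodMk (hasDerivAt_const x z))
  exact (hF (x, y, z)).hasFDerivAt.comp_hasDerivAt x hc

lemma hasDerivAt_slice2 {F : ℝ × ℝ × ℝ → ℝ} (hF : Differentiable ℝ F) (x y z : ℝ) :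
    HasDerivAt (fun t => F (x, t, z)) (Dd ee2 F (x, y, z)) y := by
  have hc : HasDerivAt (fun t : ℝ => ((x, t, z) : ℝ × ℝ × ℝ)) ee2 y :=
    (hasDerivAt_const y x).prodMk ((hasDerivAt_id y).prodMk (hasDerivAt_const y z))
  exact (hF (x, y, z)).hasFDerivAt.comp_hasDerivAt y hc

lemma hasDerivAt_slice3 {F : ℝ × ℝ × ℝ → ℝ} (hF : Differentiable ℝ F) (x y z : ℝ) :
    HasDerivAt (fun t => F (x, y, t)) (Dd ee3 F (x, y, z)) z := by
  have hc : HasDerivAt (fun t : ℝ => ((x, y, t) : ℝ × ℝ × ℝ)) ee3 z :=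
    (hasDerivAt_const z x).prodMk ((hasDerivAt_const z y).prodMk (hasDerivAt_id z))
  exact (hF (x, y, z)).hasFDerivAt.comp_hasDerivAt z hc

lemma pd1_curry {F : ℝ × ℝ × ℝ → ℝ} (hF : Differentiable ℝ F) :
    pd1 (fun x y z => F (x, y, z)) = fun x y z => Dd ee1 F (x, y, z) := by
  funext x y z
  exact (hasDerivAt_slice1 hF x y z).deriv

lemma pd2_curry {F : ℝ × ℝ × ℝ → ℝ} (hF : Differentiable ℝ F) :
    pd2 (fun x y z => F (x, y, z)) = fun x y z => Dd ee2 F (x, y, z) := by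
  funext x y z
  exact (hasDerivAt_slice2 hF x y z).deriv

lemma pd3_curry {F : ℝ × ℝ × ℝ → ℝ} (hF : Differentiable ℝ F) :
    pd3 (fun x y z => F (x, y, z)) = fun x y z => Dd ee3 F (x, y, z) := by
  funext x y z
  exact (hasDerivAt_slice3 hF x y z).deriv

lemma Dd_swap {F : ℝ × ℝ × ℝ → ℝ} (hF : ContDiff ℝ (⊤ : ℕ∞) F) (v w : ℝ × ℝ × ℝ) :
    Dd v (Dd w F) = Dd w (Dd v F) := by
  funext p
  have hF' : ContDiff ℝ (⊤ : ℕ∞) (fderiv ℝ F) := hF.fderiv_right (by simp)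
  have hd : HasFDerivAt (fderiv ℝ F) (fderiv ℝ (fderiv ℝ F) p) p :=
    ((hF'.differentiable (by simp)) p).hasFDerivAt
  have key : ∀ a : ℝ × ℝ × ℝ, fderiv ℝ (fun q => fderiv ℝ F q a) p
      = (ContinuousLinearMap.apply ℝ ℝ a).comp (fderiv ℝ (fderiv ℝ F) p) := by
    intro a
    exact (((ContinuousLinearMap.apply ℝ ℝ a).hasFDerivAt).comp p hd).fderiv
  show fderiv ℝ (fun q => fderiv ℝ F q w) p v = fderiv ℝ (fun q => fderiv ℝ F q v) p w
  rw [key w, key v]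
  simp only [ContinuousLinearMap.coe_comp', Function.comp_apply,
    ContinuousLinearMap.apply_apply]
  exact (hF.contDiffAt.isSymmSndFDerivAt (by rw [minSmoothness_of_isRCLikeNormedField]; exact WithTop.coe_le_coe.mpr (le_top : (2 : ℕ∞) ≤ ⊤))) v w

lemma Dd_zero {F : ℝ × ℝ × ℝ → ℝ} {s : Set (ℝ × ℝ × ℝ)} (hs : IsOpen s)
    (hF0 : ∀ q ∈ s, F q = 0) {p : ℝ × ℝ × ℝ} (hp : p ∈ s) (v : ℝ × ℝ × ℝ) :
    Dd v F p = 0 := by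
  have h : F =ᶠ[nhds p] fun _ => (0 : ℝ) :=
    Filter.eventually_of_mem (hs.mem_nhds hp) hF0
  show fderiv ℝ F p v = 0
  rw [h.fderiv_eq]
  simp

lemma const_of_deriv0 {A B : ℝ} {f f' : ℝ → ℝ}
    (hf : ∀ t ∈ Ioo A B, HasDerivAt f (f' t) t)
    (h0 : ∀ t ∈ Ioo A B, f' t = 0)
    {s t : ℝ} (hs : s ∈ Ioo A B) (ht : t ∈ Ioo A B) : f s = f t := by
  have key : ∀ s t : ℝ, s ∈ Ioo A B → t ∈ Ioo A B → s < t → f s = f t := by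
    intro s t hs ht hst
    have hsub : Icc s t ⊆ Ioo A B := Icc_subset_Ioo hs.1 ht.2
    have hsub' : Ioo s t ⊆ Ioo A B := fun x hx => hsub ⟨le_of_lt hx.1, le_of_lt hx.2⟩
    have hc : ContinuousOn f (Icc s t) := fun x hx =>
      ((hf x (hsub hx)).continuousAt).continuousWithinAt
    obtain ⟨c, hc1, hc2⟩ :=
      exists_hasDerivAt_eq_slope f f' hst hc (fun x hx => hf x (hsub' hx))
    rw [h0 c (hsub' hc1)] at hc2
    have htne : t - s ≠ 0 := sub_ne_zero.2 (ne_of_gt hst)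
    have : f t - f s = 0 := by
      field_simp at hc2
      linarith
    linarith
  rcases lt_trichotomy s t with h | h | h
  · exact key s t hs ht h
  · rw [h]
  · exact (key t s ht hs h).symm
/-- If u is smooth on a box Ω = I₁×I₂×I₃ and all third derivatives ∂³u/∂xᵢ²∂xⱼ (i≠j)
vanish on Ω, then u(x₁,x₂,x₃) = f₁(x₁)+f₂(x₂)+f₃(x₃)+a x₁x₂x₃+b x₁x₂+c x₁x₃+d x₂x₃
on Ω, with fᵢ smooth on Iᵢ. -/
theorem stmt9 (a₁ b₁ a₂ b₂ a₃ b₃ : ℝ)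
    (hab₁ : a₁ < b₁) (hab₂ : a₂ < b₂) (hab₃ : a₃ < b₃)
    (u : ℝ → ℝ → ℝ → ℝ)
    (hu : ContDiff ℝ (⊤ : ℕ∞) (fun p : ℝ × ℝ × ℝ => u p.1 p.2.1 p.2.2))
    (h121 : ∀ x ∈ Ioo a₁ b₁, ∀ y ∈ Ioo a₂ b₂, ∀ z ∈ Ioo a₃ b₃, pd2 (pd1 (pd1 u)) x y z = 0)
    (h131 : ∀ x ∈ Ioo a₁ b₁, ∀ y ∈ Ioo a₂ b₂, ∀ z ∈ Ioo a₃ b₃, pd3 (pd1 (pd1 u)) x y z = 0)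
    (h212 : ∀ x ∈ Ioo a₁ b₁, ∀ y ∈ Ioo a₂ b₂, ∀ z ∈ Ioo a₃ b₃, pd1 (pd2 (pd2 u)) x y z = 0)
    (h232 : ∀ x ∈ Ioo a₁ b₁, ∀ y ∈ Ioo a₂ b₂, ∀ z ∈ Ioo a₃ b₃, pd3 (pd2 (pd2 u)) x y z = 0)
    (h313 : ∀ x ∈ Ioo a₁ b₁, ∀ y ∈ Ioo a₂ b₂, ∀ z ∈ Ioo a₃ b₃, pd1 (pd3 (pd3 u)) x y z = 0)
    (h323 : ∀ x ∈ Ioo a₁ b₁, ∀ y ∈ Ioo a₂ b₂, ∀ z ∈ Ioo a₃ b₃, pd2 (pd3 (pd3 u)) x y z = 0) :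
    ∃ (f₁ f₂ f₃ : ℝ → ℝ) (a b c d : ℝ),
      ContDiffOn ℝ (⊤ : ℕ∞) f₁ (Ioo a₁ b₁) ∧ ContDiffOn ℝ (⊤ : ℕ∞) f₂ (Ioo a₂ b₂) ∧
      ContDiffOn ℝ (⊤ : ℕ∞) f₃ (Ioo a₃ b₃) ∧
      ∀ x ∈ Ioo a₁ b₁, ∀ y ∈ Ioo a₂ b₂, ∀ z ∈ Ioo a₃ b₃,
        u x y z = f₁ x + f₂ y + f₃ z + a * (x * y * z) + b * (x * y) + c * (x * z)
          + d * (y * z) := by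
  set U : ℝ × ℝ × ℝ → ℝ := fun p => u p.1 p.2.1 p.2.2 with hUdef
  have hu_eq : (fun x y z => U (x, y, z)) = u := rfl
  have hUd : Differentiable ℝ U := hu.differentiable (by simp)
  -- smoothness abbreviations
  have c1 : ContDiff ℝ (⊤ : ℕ∞) (Dd ee1 U) := Dd_contDiff hu ee1
  have c2 : ContDiff ℝ (⊤ : ℕ∞) (Dd ee2 U) := Dd_contDiff hu ee2
  have c3 : ContDiff ℝ (⊤ : ℕ∞) (Dd ee3 U) := Dd_contDiff hu ee3
  have c11 : ContDiff ℝ (⊤ : ℕ∞) (Dd ee1 (Dd ee1 U)) := Dd_contDiff c1 ee1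
  have c21 : ContDiff ℝ (⊤ : ℕ∞) (Dd ee2 (Dd ee1 U)) := Dd_contDiff c1 ee2
  have c31 : ContDiff ℝ (⊤ : ℕ∞) (Dd ee3 (Dd ee1 U)) := Dd_contDiff c1 ee3
  have c22 : ContDiff ℝ (⊤ : ℕ∞) (Dd ee2 (Dd ee2 U)) := Dd_contDiff c2 ee2
  have c32 : ContDiff ℝ (⊤ : ℕ∞) (Dd ee3 (Dd ee2 U)) := Dd_contDiff c2 ee3
  have c33 : ContDiff ℝ (⊤ : ℕ∞) (Dd ee3 (Dd ee3 U)) := Dd_contDiff c3 ee3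
  have c321 : ContDiff ℝ (⊤ : ℕ∞) (Dd ee3 (Dd ee2 (Dd ee1 U))) := Dd_contDiff c21 ee3
  -- the box
  set Ω : Set (ℝ × ℝ × ℝ) := (Ioo a₁ b₁) ×ˢ ((Ioo a₂ b₂) ×ˢ (Ioo a₃ b₃)) with hΩdef
  have hΩ : IsOpen Ω := (isOpen_Ioo.prod (isOpen_Ioo.prod isOpen_Ioo))
  have hmem : ∀ {x y z : ℝ}, x ∈ Ioo a₁ b₁ → y ∈ Ioo a₂ b₂ → z ∈ Ioo a₃ b₃ →
      ((x, y, z) : ℝ × ℝ × ℝ) ∈ Ω := fun hx hy hz => ⟨hx, hy, hz⟩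
  -- translate hypotheses
  have t1 : pd1 u = fun x y z => Dd ee1 U (x, y, z) := by
    rw [← hu_eq]; exact pd1_curry hUd
  have t2 : pd2 u = fun x y z => Dd ee2 U (x, y, z) := by
    rw [← hu_eq]; exact pd2_curry hUd
  have t3 : pd3 u = fun x y z => Dd ee3 U (x, y, z) := by
    rw [← hu_eq]; exact pd3_curry hUd
  have t11 : pd1 (pd1 u) = fun x y z => Dd ee1 (Dd ee1 U) (x, y, z) := by
    rw [t1]; exact pd1_curry (c1.differentiable (by simp))
  have t22 : pd2 (pd2 u) = fun x y z => Dd ee2 (Dd ee2 U) (x, y, z) := by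
    rw [t2]; exact pd2_curry (c2.differentiable (by simp))
  have t33 : pd3 (pd3 u) = fun x y z => Dd ee3 (Dd ee3 U) (x, y, z) := by
    rw [t3]; exact pd3_curry (c3.differentiable (by simp))
  have H121 : ∀ q ∈ Ω, Dd ee2 (Dd ee1 (Dd ee1 U)) q = 0 := by
    rintro ⟨x, y, z⟩ ⟨hx, hy, hz⟩
    have h := h121 x hx y hy z hz
    rwa [t11, pd2_curry (c11.differentiable (by simp))] at h
  have H131 : ∀ q ∈ Ω, Dd ee3 (Dd ee1 (Dd ee1 U)) q = 0 := by
    rintro ⟨x, y, z⟩ ⟨hx, hy, hz⟩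
    have h := h131 x hx y hy z hz
    rwa [t11, pd3_curry (c11.differentiable (by simp))] at h
  have H212 : ∀ q ∈ Ω, Dd ee1 (Dd ee2 (Dd ee2 U)) q = 0 := by
    rintro ⟨x, y, z⟩ ⟨hx, hy, hz⟩
    have h := h212 x hx y hy z hz
    rwa [t22, pd1_curry (c22.differentiable (by simp))] at h
  have H232 : ∀ q ∈ Ω, Dd ee3 (Dd ee2 (Dd ee2 U)) q = 0 := by
    rintro ⟨x, y, z⟩ ⟨hx, hy, hz⟩
    have h := h232 x hx y hy z hz
    rwa [t22, pd3_curry (c22.differentiable (by simp))] at h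
  have H313 : ∀ q ∈ Ω, Dd ee1 (Dd ee3 (Dd ee3 U)) q = 0 := by
    rintro ⟨x, y, z⟩ ⟨hx, hy, hz⟩
    have h := h313 x hx y hy z hz
    rwa [t33, pd1_curry (c33.differentiable (by simp))] at h
  have H323 : ∀ q ∈ Ω, Dd ee2 (Dd ee3 (Dd ee3 U)) q = 0 := by
    rintro ⟨x, y, z⟩ ⟨hx, hy, hz⟩
    have h := h323 x hx y hy z hz
    rwa [t33, pd2_curry (c33.differentiable (by simp))] at h
  -- derivatives of W := Dd ee3 (Dd ee2 (Dd ee1 U)) vanish on Ω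
  have ZW1 : ∀ q ∈ Ω, Dd ee1 (Dd ee3 (Dd ee2 (Dd ee1 U))) q = 0 := by
    have e : Dd ee1 (Dd ee3 (Dd ee2 (Dd ee1 U)))
        = Dd ee3 (Dd ee2 (Dd ee1 (Dd ee1 U))) := by
      rw [Dd_swap c21 ee1 ee3, Dd_swap c1 ee1 ee2]
    intro q hq; rw [e]; exact Dd_zero hΩ H121 hq ee3
  have ZW2 : ∀ q ∈ Ω, Dd ee2 (Dd ee3 (Dd ee2 (Dd ee1 U))) q = 0 := by
    have e : Dd ee2 (Dd ee3 (Dd ee2 (Dd ee1 U)))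
        = Dd ee3 (Dd ee1 (Dd ee2 (Dd ee2 U))) := by
      rw [Dd_swap c21 ee2 ee3, Dd_swap hu ee2 ee1, Dd_swap c2 ee2 ee1]
    intro q hq; rw [e]; exact Dd_zero hΩ H212 hq ee3
  have ZW3 : ∀ q ∈ Ω, Dd ee3 (Dd ee3 (Dd ee2 (Dd ee1 U))) q = 0 := by
    have e : Dd ee3 (Dd ee3 (Dd ee2 (Dd ee1 U)))
        = Dd ee2 (Dd ee1 (Dd ee3 (Dd ee3 U))) := by
      rw [Dd_swap c1 ee3 ee2, Dd_swap hu ee3 ee1,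
        Dd_swap (Dd_contDiff c3 ee1) ee3 ee2, Dd_swap c3 ee3 ee1]
    intro q hq; rw [e]; exact Dd_zero hΩ H313 hq ee2
  -- base point
  set x₀ : ℝ := (a₁ + b₁) / 2 with hx₀def
  set y₀ : ℝ := (a₂ + b₂) / 2 with hy₀def
  set z₀ : ℝ := (a₃ + b₃) / 2 with hz₀def
  have hx₀ : x₀ ∈ Ioo a₁ b₁ := ⟨by simp [hx₀def]; linarith, by simp [hx₀def]; linarith⟩
  have hy₀ : y₀ ∈ Ioo a₂ b₂ := ⟨by simp [hy₀def]; linarith, by simp [hy₀def]; linarith⟩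
  have hz₀ : z₀ ∈ Ioo a₃ b₃ := ⟨by simp [hz₀def]; linarith, by simp [hz₀def]; linarith⟩
  -- W is constant = aa on Ω
  set aa : ℝ := Dd ee3 (Dd ee2 (Dd ee1 U)) (x₀, y₀, z₀) with haa
  have CW : ∀ x ∈ Ioo a₁ b₁, ∀ y ∈ Ioo a₂ b₂, ∀ z ∈ Ioo a₃ b₃,
      Dd ee3 (Dd ee2 (Dd ee1 U)) (x, y, z) = aa := by
    intro x hx y hy z hz
    have s1 : Dd ee3 (Dd ee2 (Dd ee1 U)) (x, y, z)
        = Dd ee3 (Dd ee2 (Dd ee1 U)) (x, y, z₀) :=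
      const_of_deriv0 (f' := fun t => Dd ee3 (Dd ee3 (Dd ee2 (Dd ee1 U))) (x, y, t))
        (fun t _ => hasDerivAt_slice3 (c321.differentiable (by simp)) x y t)
        (fun t ht => ZW3 _ (hmem hx hy ht)) hz hz₀
    have s2 : Dd ee3 (Dd ee2 (Dd ee1 U)) (x, y, z₀)
        = Dd ee3 (Dd ee2 (Dd ee1 U)) (x, y₀, z₀) :=
      const_of_deriv0 (f' := fun t => Dd ee2 (Dd ee3 (Dd ee2 (Dd ee1 U))) (x, t, z₀))
        (fun t _ => hasDerivAt_slice2 (c321.differentiable (by simp)) x t z₀)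
        (fun t ht => ZW2 _ (hmem hx ht hz₀)) hy hy₀
    have s3 : Dd ee3 (Dd ee2 (Dd ee1 U)) (x, y₀, z₀)
        = Dd ee3 (Dd ee2 (Dd ee1 U)) (x₀, y₀, z₀) :=
      const_of_deriv0 (f' := fun t => Dd ee1 (Dd ee3 (Dd ee2 (Dd ee1 U))) (t, y₀, z₀))
        (fun t _ => hasDerivAt_slice1 (c321.differentiable (by simp)) t y₀ z₀)
        (fun t ht => ZW1 _ (hmem ht hy₀ hz₀)) hx hx₀
    rw [s1, s2, s3]
  -- zero facts for G21 = Dd ee2 (Dd ee1 U)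
  have Z21_1 : ∀ q ∈ Ω, Dd ee1 (Dd ee2 (Dd ee1 U)) q = 0 := by
    have e : Dd ee1 (Dd ee2 (Dd ee1 U)) = Dd ee2 (Dd ee1 (Dd ee1 U)) :=
      Dd_swap c1 ee1 ee2
    intro q hq; rw [e]; exact H121 q hq
  have Z21_2 : ∀ q ∈ Ω, Dd ee2 (Dd ee2 (Dd ee1 U)) q = 0 := by
    have e : Dd ee2 (Dd ee2 (Dd ee1 U)) = Dd ee1 (Dd ee2 (Dd ee2 U)) := by
      rw [Dd_swap hu ee2 ee1, Dd_swap c2 ee2 ee1]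
    intro q hq; rw [e]; exact H212 q hq
  -- zero facts for G31 = Dd ee3 (Dd ee1 U)
  have Z31_1 : ∀ q ∈ Ω, Dd ee1 (Dd ee3 (Dd ee1 U)) q = 0 := by
    have e : Dd ee1 (Dd ee3 (Dd ee1 U)) = Dd ee3 (Dd ee1 (Dd ee1 U)) :=
      Dd_swap c1 ee1 ee3
    intro q hq; rw [e]; exact H131 q hq
  have Z31_3 : ∀ q ∈ Ω, Dd ee3 (Dd ee3 (Dd ee1 U)) q = 0 := by
    have e : Dd ee3 (Dd ee3 (Dd ee1 U)) = Dd ee1 (Dd ee3 (Dd ee3 U)) := by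
      rw [Dd_swap hu ee3 ee1, Dd_swap c3 ee3 ee1]
    intro q hq; rw [e]; exact H313 q hq
  have S31_2 : Dd ee2 (Dd ee3 (Dd ee1 U)) = Dd ee3 (Dd ee2 (Dd ee1 U)) :=
    Dd_swap c1 ee2 ee3
  -- zero facts for G32 = Dd ee3 (Dd ee2 U)
  have Z32_2 : ∀ q ∈ Ω, Dd ee2 (Dd ee3 (Dd ee2 U)) q = 0 := by
    have e : Dd ee2 (Dd ee3 (Dd ee2 U)) = Dd ee3 (Dd ee2 (Dd ee2 U)) :=
      Dd_swap c2 ee2 ee3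
    intro q hq; rw [e]; exact H232 q hq
  have Z32_3 : ∀ q ∈ Ω, Dd ee3 (Dd ee3 (Dd ee2 U)) q = 0 := by
    have e : Dd ee3 (Dd ee3 (Dd ee2 U)) = Dd ee2 (Dd ee3 (Dd ee3 U)) := by
      rw [Dd_swap hu ee3 ee2, Dd_swap c3 ee3 ee2]
    intro q hq; rw [e]; exact H323 q hq
  have S32_1 : Dd ee1 (Dd ee3 (Dd ee2 U)) = Dd ee3 (Dd ee2 (Dd ee1 U)) := by
    rw [Dd_swap c2 ee1 ee3, Dd_swap hu ee1 ee2]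
  -- constants
  set bb : ℝ := Dd ee2 (Dd ee1 U) (x₀, y₀, z₀) - aa * z₀ with hbb
  set cc : ℝ := Dd ee3 (Dd ee1 U) (x₀, y₀, z₀) - aa * y₀ with hcc
  set dd : ℝ := Dd ee3 (Dd ee2 U) (x₀, y₀, z₀) - aa * x₀ with hdd
  -- G21 = aa*z + bb on Ω
  have F21 : ∀ x ∈ Ioo a₁ b₁, ∀ y ∈ Ioo a₂ b₂, ∀ z ∈ Ioo a₃ b₃,
      Dd ee2 (Dd ee1 U) (x, y, z) = aa * z + bb := by
    intro x hx y hy z hz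
    have s1 : Dd ee2 (Dd ee1 U) (x, y, z) - aa * z
        = Dd ee2 (Dd ee1 U) (x, y, z₀) - aa * z₀ :=
      const_of_deriv0 (f := fun t => Dd ee2 (Dd ee1 U) (x, y, t) - aa * t)
        (f' := fun t => Dd ee3 (Dd ee2 (Dd ee1 U)) (x, y, t) - aa)
        (fun t _ => (hasDerivAt_slice3 (c21.differentiable (by simp)) x y t).sub
          (by simpa using (hasDerivAt_id t).const_mul aa))
        (fun t ht => by show Dd ee3 (Dd ee2 (Dd ee1 U)) (x, y, t) - aa = 0
                        rw [CW x hx y hy t ht]; ring) hz hz₀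
    have s2 : Dd ee2 (Dd ee1 U) (x, y, z₀) = Dd ee2 (Dd ee1 U) (x, y₀, z₀) :=
      const_of_deriv0 (f' := fun t => Dd ee2 (Dd ee2 (Dd ee1 U)) (x, t, z₀))
        (fun t _ => hasDerivAt_slice2 (c21.differentiable (by simp)) x t z₀)
        (fun t ht => Z21_2 _ (hmem hx ht hz₀)) hy hy₀
    have s3 : Dd ee2 (Dd ee1 U) (x, y₀, z₀) = Dd ee2 (Dd ee1 U) (x₀, y₀, z₀) :=
      const_of_deriv0 (f' := fun t => Dd ee1 (Dd ee2 (Dd ee1 U)) (t, y₀, z₀))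
        (fun t _ => hasDerivAt_slice1 (c21.differentiable (by simp)) t y₀ z₀)
        (fun t ht => Z21_1 _ (hmem ht hy₀ hz₀)) hx hx₀
    rw [hbb]; linarith [s1, s2, s3]
  -- G31 = aa*y + cc on Ω
  have F31 : ∀ x ∈ Ioo a₁ b₁, ∀ y ∈ Ioo a₂ b₂, ∀ z ∈ Ioo a₃ b₃,
      Dd ee3 (Dd ee1 U) (x, y, z) = aa * y + cc := by
    intro x hx y hy z hz
    have s1 : Dd ee3 (Dd ee1 U) (x, y, z) - aa * y
        = Dd ee3 (Dd ee1 U) (x, y₀, z) - aa * y₀ :=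
      const_of_deriv0 (f := fun t => Dd ee3 (Dd ee1 U) (x, t, z) - aa * t)
        (f' := fun t => Dd ee2 (Dd ee3 (Dd ee1 U)) (x, t, z) - aa)
        (fun t _ => (hasDerivAt_slice2 (c31.differentiable (by simp)) x t z).sub
          (by simpa using (hasDerivAt_id t).const_mul aa))
        (fun t ht => by show Dd ee2 (Dd ee3 (Dd ee1 U)) (x, t, z) - aa = 0
                        rw [S31_2, CW x hx t ht z hz]; ring) hy hy₀
    have s2 : Dd ee3 (Dd ee1 U) (x, y₀, z) = Dd ee3 (Dd ee1 U) (x, y₀, z₀) :=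
      const_of_deriv0 (f' := fun t => Dd ee3 (Dd ee3 (Dd ee1 U)) (x, y₀, t))
        (fun t _ => hasDerivAt_slice3 (c31.differentiable (by simp)) x y₀ t)
        (fun t ht => Z31_3 _ (hmem hx hy₀ ht)) hz hz₀
    have s3 : Dd ee3 (Dd ee1 U) (x, y₀, z₀) = Dd ee3 (Dd ee1 U) (x₀, y₀, z₀) :=
      const_of_deriv0 (f' := fun t => Dd ee1 (Dd ee3 (Dd ee1 U)) (t, y₀, z₀))
        (fun t _ => hasDerivAt_slice1 (c31.differentiable (by simp)) t y₀ z₀)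
        (fun t ht => Z31_1 _ (hmem ht hy₀ hz₀)) hx hx₀
    rw [hcc]; linarith [s1, s2, s3]
  -- G32 = aa*x + dd on Ω
  have F32 : ∀ x ∈ Ioo a₁ b₁, ∀ y ∈ Ioo a₂ b₂, ∀ z ∈ Ioo a₃ b₃,
      Dd ee3 (Dd ee2 U) (x, y, z) = aa * x + dd := by
    intro x hx y hy z hz
    have s1 : Dd ee3 (Dd ee2 U) (x, y, z) - aa * x
        = Dd ee3 (Dd ee2 U) (x₀, y, z) - aa * x₀ :=
      const_of_deriv0 (f := fun t => Dd ee3 (Dd ee2 U) (t, y, z) - aa * t)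
        (f' := fun t => Dd ee1 (Dd ee3 (Dd ee2 U)) (t, y, z) - aa)
        (fun t _ => (hasDerivAt_slice1 (c32.differentiable (by simp)) t y z).sub
          (by simpa using (hasDerivAt_id t).const_mul aa))
        (fun t ht => by show Dd ee1 (Dd ee3 (Dd ee2 U)) (t, y, z) - aa = 0
                        rw [S32_1, CW t ht y hy z hz]; ring) hx hx₀
    have s2 : Dd ee3 (Dd ee2 U) (x₀, y, z) = Dd ee3 (Dd ee2 U) (x₀, y₀, z) :=
      const_of_deriv0 (f' := fun t => Dd ee2 (Dd ee3 (Dd ee2 U)) (x₀, t, z))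
        (fun t _ => hasDerivAt_slice2 (c32.differentiable (by simp)) x₀ t z)
        (fun t ht => Z32_2 _ (hmem hx₀ ht hz)) hy hy₀
    have s3 : Dd ee3 (Dd ee2 U) (x₀, y₀, z) = Dd ee3 (Dd ee2 U) (x₀, y₀, z₀) :=
      const_of_deriv0 (f' := fun t => Dd ee3 (Dd ee3 (Dd ee2 U)) (x₀, y₀, t))
        (fun t _ => hasDerivAt_slice3 (c32.differentiable (by simp)) x₀ y₀ t)
        (fun t ht => Z32_3 _ (hmem hx₀ hy₀ ht)) hz hz₀
    rw [hdd]; linarith [s1, s2, s3]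
  -- first derivative facts
  have ClaimA : ∀ x ∈ Ioo a₁ b₁, ∀ y ∈ Ioo a₂ b₂, ∀ z ∈ Ioo a₃ b₃,
      Dd ee1 U (x, y, z) - (aa * (y * z) + bb * y + cc * z)
        = Dd ee1 U (x, y₀, z₀) - (aa * (y₀ * z₀) + bb * y₀ + cc * z₀) := by
    intro x hx y hy z hz
    have sA1 : Dd ee1 U (x, y, z) - (aa * y + cc) * z
        = Dd ee1 U (x, y, z₀) - (aa * y + cc) * z₀ :=
      const_of_deriv0 (f := fun t => Dd ee1 U (x, y, t) - (aa * y + cc) * t)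
        (f' := fun t => Dd ee3 (Dd ee1 U) (x, y, t) - (aa * y + cc))
        (fun t _ => (hasDerivAt_slice3 (c1.differentiable (by simp)) x y t).sub
          (by simpa using (hasDerivAt_id t).const_mul (aa * y + cc)))
        (fun t ht => by
          show Dd ee3 (Dd ee1 U) (x, y, t) - (aa * y + cc) = 0
          rw [F31 x hx y hy t ht]; ring) hz hz₀
    have sA2 : Dd ee1 U (x, y, z₀) - (aa * z₀ + bb) * y
        = Dd ee1 U (x, y₀, z₀) - (aa * z₀ + bb) * y₀ :=
      const_of_deriv0 (f := fun t => Dd ee1 U (x, t, z₀) - (aa * z₀ + bb) * t)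
        (f' := fun t => Dd ee2 (Dd ee1 U) (x, t, z₀) - (aa * z₀ + bb))
        (fun t _ => (hasDerivAt_slice2 (c1.differentiable (by simp)) x t z₀).sub
          (by simpa using (hasDerivAt_id t).const_mul (aa * z₀ + bb)))
        (fun t ht => by
          show Dd ee2 (Dd ee1 U) (x, t, z₀) - (aa * z₀ + bb) = 0
          rw [F21 x hx t ht z₀ hz₀]; ring) hy hy₀
    linear_combination sA1 + sA2
  have ClaimA2 : ∀ y ∈ Ioo a₂ b₂, ∀ z ∈ Ioo a₃ b₃,
      Dd ee2 U (x₀, y, z) - (aa * x₀ + dd) * z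
        = Dd ee2 U (x₀, y, z₀) - (aa * x₀ + dd) * z₀ := by
    intro y hy z hz
    exact const_of_deriv0 (f := fun t => Dd ee2 U (x₀, y, t) - (aa * x₀ + dd) * t)
      (f' := fun t => Dd ee3 (Dd ee2 U) (x₀, y, t) - (aa * x₀ + dd))
      (fun t _ => (hasDerivAt_slice3 (c2.differentiable (by simp)) x₀ y t).sub
        (by simpa using (hasDerivAt_id t).const_mul (aa * x₀ + dd)))
      (fun t ht => by
        show Dd ee3 (Dd ee2 U) (x₀, y, t) - (aa * x₀ + dd) = 0
        rw [F32 x₀ hx₀ y hy t ht]; ring) hz hz₀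
  -- smoothness of the slice functions
  have hs1 : ContDiff ℝ (⊤ : ℕ∞) (fun s : ℝ => u s y₀ z₀) :=
    hu.comp (contDiff_id.prodMk (contDiff_const (c := ((y₀, z₀) : ℝ × ℝ))))
  have hs2 : ContDiff ℝ (⊤ : ℕ∞) (fun s : ℝ => u x₀ s z₀) :=
    hu.comp ((contDiff_const (c := x₀)).prodMk (contDiff_id.prodMk (contDiff_const (c := z₀))))
  have hs3 : ContDiff ℝ (⊤ : ℕ∞) (fun s : ℝ => u x₀ y₀ s) :=
    hu.comp ((contDiff_const (c := x₀)).prodMk ((contDiff_const (c := y₀)).prodMk contDiff_id))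
  refine ⟨fun s => u s y₀ z₀ - (aa * (s * y₀ * z₀) + bb * (s * y₀) + cc * (s * z₀)
      + dd * (y₀ * z₀)),
    fun s => u x₀ s z₀ - (aa * (x₀ * s * z₀) + bb * (x₀ * s) + cc * (x₀ * z₀)
      + dd * (s * z₀)) - (u x₀ y₀ z₀ - (aa * (x₀ * y₀ * z₀) + bb * (x₀ * y₀)
      + cc * (x₀ * z₀) + dd * (y₀ * z₀))),
    fun s => u x₀ y₀ s - (aa * (x₀ * y₀ * s) + bb * (x₀ * y₀) + cc * (x₀ * s)
      + dd * (y₀ * s)) - (u x₀ y₀ z₀ - (aa * (x₀ * y₀ * z₀) + bb * (x₀ * y₀)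
      + cc * (x₀ * z₀) + dd * (y₀ * z₀))),
    aa, bb, cc, dd, ?_, ?_, ?_, ?_⟩
  · exact (hs1.sub (by fun_prop)).contDiffOn
  · exact ((hs2.sub (by fun_prop)).sub contDiff_const).contDiffOn
  · exact ((hs3.sub (by fun_prop)).sub contDiff_const).contDiffOn
  intro x hx y hy z hz
  have EB : U (x, y, z) - U (x, y₀, z₀)
        - (aa * (y * z) + bb * y + cc * z - (aa * (y₀ * z₀) + bb * y₀ + cc * z₀)) * x
      = U (x₀, y, z) - U (x₀, y₀, z₀)
        - (aa * (y * z) + bb * y + cc * z - (aa * (y₀ * z₀) + bb * y₀ + cc * z₀)) * x₀ :=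
    const_of_deriv0 (f := fun t => U (t, y, z) - U (t, y₀, z₀)
        - (aa * (y * z) + bb * y + cc * z - (aa * (y₀ * z₀) + bb * y₀ + cc * z₀)) * t)
      (f' := fun t => Dd ee1 U (t, y, z) - Dd ee1 U (t, y₀, z₀)
        - (aa * (y * z) + bb * y + cc * z - (aa * (y₀ * z₀) + bb * y₀ + cc * z₀)))
      (fun t _ => ((hasDerivAt_slice1 hUd t y z).sub (hasDerivAt_slice1 hUd t y₀ z₀)).sub
        (by simpa using (hasDerivAt_id t).const_mul (aa * (y * z) + bb * y + cc * z - (aa * (y₀ * z₀) + bb * y₀ + cc * z₀))))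
      (fun t ht => by
        show Dd ee1 U (t, y, z) - Dd ee1 U (t, y₀, z₀)
          - (aa * (y * z) + bb * y + cc * z - (aa * (y₀ * z₀) + bb * y₀ + cc * z₀)) = 0
        linear_combination ClaimA t ht y hy z hz) hx hx₀
  have EC : U (x₀, y, z) - U (x₀, y, z₀)
        - ((aa * x₀ + dd) * z - (aa * x₀ + dd) * z₀) * y
      = U (x₀, y₀, z) - U (x₀, y₀, z₀)
        - ((aa * x₀ + dd) * z - (aa * x₀ + dd) * z₀) * y₀ :=
    const_of_deriv0 (f := fun t => U (x₀, t, z) - U (x₀, t, z₀)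
        - ((aa * x₀ + dd) * z - (aa * x₀ + dd) * z₀) * t)
      (f' := fun t => Dd ee2 U (x₀, t, z) - Dd ee2 U (x₀, t, z₀)
        - ((aa * x₀ + dd) * z - (aa * x₀ + dd) * z₀))
      (fun t _ => ((hasDerivAt_slice2 hUd x₀ t z).sub (hasDerivAt_slice2 hUd x₀ t z₀)).sub
        (by simpa using (hasDerivAt_id t).const_mul ((aa * x₀ + dd) * z - (aa * x₀ + dd) * z₀)))
      (fun t ht => by
        show Dd ee2 U (x₀, t, z) - Dd ee2 U (x₀, t, z₀)
          - ((aa * x₀ + dd) * z - (aa * x₀ + dd) * z₀) = 0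
        linear_combination (ClaimA2 t ht z hz) - (ClaimA2 t ht z₀ hz₀)) hy hy₀
  have hB : U (x, y, z) = u x y z := rfl
  linear_combination EB + EC
end

section
/- Let Ω ⊂ ℝ³ be a bounded open box and let u be a C² function on the closure of Ω of the form u(x₁,x₂,x₃) = f₁(x₁) + f₂(x₂) + f₃(x₃) + a·x₁x₂x₃ + b·x₁x₂ + c·x₁x₃ + d·x₂x₃ with f_i ∈ C², a,b,c,d ∈ ℝ. If u vanishes on ∂Ω together with its normal derivative, then u ≡ 0 on Ω. -/
open Set

/-- If u = f₁(x₁)+f₂(x₂)+f₃(x₃)+a x₁x₂x₃+b x₁x₂+c x₁x₃+d x₂x₃ (fᵢ of class C² on the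
closed intervals) vanishes on the boundary of the box together with its normal
derivative, then u ≡ 0 on the box. -/
theorem stmt10 (a₁ b₁ a₂ b₂ a₃ b₃ : ℝ)
    (hab₁ : a₁ < b₁) (hab₂ : a₂ < b₂) (hab₃ : a₃ < b₃)
    (f₁ f₂ f₃ : ℝ → ℝ) (a b c d : ℝ)
    (hf₁ : ContDiffOn ℝ 2 f₁ (Icc a₁ b₁)) (hf₂ : ContDiffOn ℝ 2 f₂ (Icc a₂ b₂))
    (hf₃ : ContDiffOn ℝ 2 f₃ (Icc a₃ b₃))
    (u : ℝ → ℝ → ℝ → ℝ)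
    (hu : ∀ x y z : ℝ, u x y z = f₁ x + f₂ y + f₃ z + a * (x * y * z) + b * (x * y)
      + c * (x * z) + d * (y * z))
    -- u vanishes on the two faces x₁ = a₁, b₁ together with the normal derivative ∂₁u
    (hface1 : ∀ y ∈ Icc a₂ b₂, ∀ z ∈ Icc a₃ b₃,
      u a₁ y z = 0 ∧ u b₁ y z = 0 ∧ pd1 u a₁ y z = 0 ∧ pd1 u b₁ y z = 0)
    -- u vanishes on the two faces x₂ = a₂, b₂ together with the normal derivative ∂₂u
    (hface2 : ∀ x ∈ Icc a₁ b₁, ∀ z ∈ Icc a₃ b₃,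
      u x a₂ z = 0 ∧ u x b₂ z = 0 ∧ pd2 u x a₂ z = 0 ∧ pd2 u x b₂ z = 0)
    -- u vanishes on the two faces x₃ = a₃, b₃ together with the normal derivative ∂₃u
    (hface3 : ∀ x ∈ Icc a₁ b₁, ∀ y ∈ Icc a₂ b₂,
      u x y a₃ = 0 ∧ u x y b₃ = 0 ∧ pd3 u x y a₃ = 0 ∧ pd3 u x y b₃ = 0) :
    ∀ x ∈ Icc a₁ b₁, ∀ y ∈ Icc a₂ b₂, ∀ z ∈ Icc a₃ b₃, u x y z = 0 := by
  have ha1 : a₁ ∈ Icc a₁ b₁ := ⟨le_refl _, hab₁.le⟩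
  have hb1 : b₁ ∈ Icc a₁ b₁ := ⟨hab₁.le, le_refl _⟩
  have ha2 : a₂ ∈ Icc a₂ b₂ := ⟨le_refl _, hab₂.le⟩
  have hb2 : b₂ ∈ Icc a₂ b₂ := ⟨hab₂.le, le_refl _⟩
  have ha3 : a₃ ∈ Icc a₃ b₃ := ⟨le_refl _, hab₃.le⟩
  have hb3 : b₃ ∈ Icc a₃ b₃ := ⟨hab₃.le, le_refl _⟩
  have hne1 : a₁ - b₁ ≠ 0 := sub_ne_zero.mpr hab₁.ne
  have hne2 : a₂ - b₂ ≠ 0 := sub_ne_zero.mpr hab₂.ne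
  have hne3 : a₃ - b₃ ≠ 0 := sub_ne_zero.mpr hab₃.ne
  -- difference of the two x₁-faces
  have hs : ∀ y ∈ Icc a₂ b₂, ∀ z ∈ Icc a₃ b₃,
      f₁ a₁ - f₁ b₁ + (a₁ - b₁) * (a * (y * z) + b * y + c * z) = 0 := by
    intro y hy z hz
    have h1 := (hface1 y hy z hz).1
    have h2 := (hface1 y hy z hz).2.1
    rw [hu] at h1 h2
    linear_combination h1 - h2
  have s1 := hs a₂ ha2 a₃ ha3
  have s2 := hs a₂ ha2 b₃ hb3
  have s3 := hs b₂ hb2 a₃ ha3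
  have s4 := hs b₂ hb2 b₃ hb3
  have hac : a * a₂ + c = 0 := by
    have t : (a₁ - b₁) * ((a * a₂ + c) * (a₃ - b₃)) = 0 := by linear_combination s1 - s2
    have t' := (mul_eq_zero.mp t).resolve_left hne1
    exact (mul_eq_zero.mp t').resolve_right hne3
  have hac' : a * b₂ + c = 0 := by
    have t : (a₁ - b₁) * ((a * b₂ + c) * (a₃ - b₃)) = 0 := by linear_combination s3 - s4
    have t' := (mul_eq_zero.mp t).resolve_left hne1
    exact (mul_eq_zero.mp t').resolve_right hne3
  have ha : a = 0 := by
    have t : a * (a₂ - b₂) = 0 := by linear_combination hac - hac'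
    exact (mul_eq_zero.mp t).resolve_right hne2
  have hc : c = 0 := by linear_combination hac - a₂ * ha
  have hb : b = 0 := by
    have t : (a₁ - b₁) * ((b + a * a₃) * (a₂ - b₂)) = 0 := by linear_combination s1 - s3
    have t' := (mul_eq_zero.mp t).resolve_left hne1
    have t'' := (mul_eq_zero.mp t').resolve_right hne2
    linear_combination t'' - a₃ * ha
  have hd : d = 0 := by
    have h1 := (hface2 a₁ ha1 a₃ ha3).1
    have h2 := (hface2 a₁ ha1 a₃ ha3).2.1
    have h3 := (hface2 a₁ ha1 b₃ hb3).1
    have h4 := (hface2 a₁ ha1 b₃ hb3).2.1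
    rw [hu] at h1 h2 h3 h4
    have t : (a₂ - b₂) * ((a * a₁ + d) * (a₃ - b₃)) = 0 := by
      linear_combination h1 - h2 - h3 + h4
    have t' := (mul_eq_zero.mp t).resolve_left hne2
    have t'' := (mul_eq_zero.mp t').resolve_right hne3
    linear_combination t'' - a₁ * ha
  subst ha hb hc hd
  intro x hx y hy z hz
  have e1 := (hface1 y hy z hz).1
  have e2 := (hface2 x hx z hz).1
  have e3 := (hface2 a₁ ha1 z hz).1
  rw [hu] at e1 e2 e3
  rw [hu]
  linear_combination e1 + e2 - e3
end
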